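/- arXiv:1807.00070 — 5 statements merged into one kernel-verified Lean document; each statement's English description precedes it below -/
import Mathlib

section
/- One complete iteration of multiple-proposal MCMC with Barker weights preserves the target distribution: assume in addition that κ is exchangeable in its N proposed points, i.e. κ(x, z∘σ) = κ(x, z) for every x ∈ ℝ^D, every z ∈ (ℝ^D)^N and every permutation σ of {1,…,N}. Then for every measurable f : ℝ^D → ℝ with ∫_{ℝ^D} |f(x)| π(x) dx < ∞ one has ∫_{ℝ^D} ∫_{(ℝ^D)^N} π(x) κ(x, z) ( ∑_{j=1}^{N+1} w_j(y) f(y_j) ) dz dx = ∫_{ℝ^D} f(x) π(x) dx, where y = (x, z_1, …, z_N) ∈ (ℝ^D)^{N+1} is the tuple obtained by placing the current state x in front of the N proposals z. In other words, if the current sample is distributed according to π, then a sample drawn from the N+1 points y with the Barker probabilities w_j(y) is again distributed according to π. -/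
/-!
Write `g j y = π(y_j) κ(y_j, y_{∖j})` for the density of the tuple `y` when the current state sits
in slot `j`. Exchangeability of `κ` makes `g` equivariant, `g j (y ∘ σ) = g (σ j) y`, and Lebesgue
measure on `(ℝ^D)^{N+1}` is invariant under permuting slots. Swapping slots `0` and `j` therefore
turns the `j`-th term `∫ g₀ (g_j / S) f(y_j)` into `∫ g_j (g₀ / S) f(y₀)`; summing over `j` the
Barker weights collapse, `∑ⱼ g_j · g₀ / S = g₀`, and `∫ g₀(y) f(y₀) dy = ∫ π f` because each
`κ(x, ·)` integrates to `1`.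
-/

open MeasureTheory Finset

section CoordinatePermutation

variable {ι X E : Type*} [Fintype ι] [MeasureSpace X] [SigmaFinite (volume : Measure X)]
  [NormedAddCommGroup E]

theorem integral_comp_perm [NormedSpace ℝ E] (σ : Equiv.Perm ι) (H : (ι → X) → E) :
    ∫ y, H (y ∘ σ) = ∫ y, H y :=
  (volume_preserving_arrowCongr' σ.symm (.refl X) (.id volume)).integral_comp' H

theorem integrable_comp_perm_iff (σ : Equiv.Perm ι) {H : (ι → X) → E} :
    Integrable (fun y => H (y ∘ σ)) ↔ Integrable H :=
  (volume_preserving_arrowCongr' σ.symm (.refl X) (.id volume)).integrable_comp_emb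
    (MeasurableEquiv.arrowCongr' σ.symm (.refl X)).measurableEmbedding

end CoordinatePermutation

section BarkerWeights

variable {ι : Type*} {s : Finset ι} {a : ι → ℝ}

theorem mul_div_sum_le_of_nonneg (ha : ∀ k ∈ s, 0 ≤ a k) {i j : ι} (hi : i ∈ s) (hj : j ∈ s) :
    a i * (a j / ∑ k ∈ s, a k) ≤ a j := by
  rw [mul_div_left_comm]
  exact mul_le_of_le_one_right (ha j hj) (div_le_one_of_le₀ (single_le_sum ha hi) (sum_nonneg ha))

theorem sum_mul_div_sum_of_nonneg (ha : ∀ k ∈ s, 0 ≤ a k) {i : ι} (hi : i ∈ s) :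
    (∑ k ∈ s, a k) * (a i / ∑ k ∈ s, a k) = a i :=
  mul_div_cancel_of_imp' fun h => (sum_eq_zero_iff_of_nonneg ha).mp h i hi

end BarkerWeights

section Barker

variable {ι X : Type*} [Fintype ι] {g : ι → (ι → X) → ℝ} {F : X → ℝ}

/-- The mean of `F` at the slot of `y` selected with probability proportional to `g j y`;
it is `0` when all weights vanish. -/
noncomputable def barkerMean (g : ι → (ι → X) → ℝ) (F : X → ℝ) (y : ι → X) : ℝ :=
  ∑ j, g j y / (∑ k, g k y) * F (y j)

theorem sum_comp_perm_of_equivariant (hg : ∀ (σ : Equiv.Perm ι) j y, g j (y ∘ σ) = g (σ j) y)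
    (σ : Equiv.Perm ι) (y : ι → X) : ∑ k, g k (y ∘ σ) = ∑ k, g k y := by
  simp only [hg]
  exact Equiv.sum_comp σ fun k => g k y

theorem mul_div_sum_mul_comp_swap [DecidableEq ι]
    (hg : ∀ (σ : Equiv.Perm ι) j y, g j (y ∘ σ) = g (σ j) y) (i j : ι) (y : ι → X) :
    g i (y ∘ Equiv.swap i j) * (g j (y ∘ Equiv.swap i j) / (∑ k, g k (y ∘ Equiv.swap i j)) *
      F ((y ∘ Equiv.swap i j) j)) = g j y * (g i y / (∑ k, g k y) * F (y i)) := by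
  rw [sum_comp_perm_of_equivariant hg]
  simp only [hg, Function.comp_apply, Equiv.swap_apply_left, Equiv.swap_apply_right]

variable [DecidableEq ι] [MeasureSpace X] [SigmaFinite (volume : Measure X)]

theorem integrable_mul_apply_of_equivariant
    (hg : ∀ (σ : Equiv.Perm ι) j y, g j (y ∘ σ) = g (σ j) y) {i : ι}
    (hi : Integrable fun y => g i y * F (y i)) (j : ι) :
    Integrable fun y => g j y * F (y j) := by
  refine (integrable_comp_perm_iff (Equiv.swap i j)).mp ?_
  simpa [hg] using hi

theorem integrable_mul_div_sum_mul (hg : ∀ (σ : Equiv.Perm ι) j y, g j (y ∘ σ) = g (σ j) y)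
    (hg0 : ∀ j y, 0 ≤ g j y) (hgm : ∀ j, Measurable (g j)) (hFm : Measurable F) {i : ι}
    (hi : Integrable fun y => g i y * F (y i)) (j : ι) :
    Integrable fun y => g i y * (g j y / (∑ k, g k y) * F (y j)) := by
  have hSm : Measurable fun y => ∑ k, g k y := Finset.measurable_sum _ fun k _ => hgm k
  refine (integrable_mul_apply_of_equivariant hg hi j).norm.mono'
    ((hgm i).mul (((hgm j).div hSm).mul (hFm.comp (measurable_pi_apply j)))).aestronglyMeasurable
    (.of_forall fun y => ?_)
  have hw : 0 ≤ g i y * (g j y / ∑ k, g k y) :=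
    mul_nonneg (hg0 i y) (div_nonneg (hg0 j y) (sum_nonneg fun k _ => hg0 k y))
  rw [← mul_assoc, norm_mul _ (F (y j)), norm_mul _ (F (y j)), Real.norm_of_nonneg hw,
    Real.norm_of_nonneg (hg0 j y)]
  gcongr
  exact mul_div_sum_le_of_nonneg (fun k _ => hg0 k y) (mem_univ i) (mem_univ j)

theorem integrable_mul_barkerMean (hg : ∀ (σ : Equiv.Perm ι) j y, g j (y ∘ σ) = g (σ j) y)
    (hg0 : ∀ j y, 0 ≤ g j y) (hgm : ∀ j, Measurable (g j)) (hFm : Measurable F) {i : ι}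
    (hi : Integrable fun y => g i y * F (y i)) :
    Integrable fun y => g i y * barkerMean g F y := by
  simp only [barkerMean, mul_sum]
  exact integrable_finsetSum _ fun j _ => integrable_mul_div_sum_mul hg hg0 hgm hFm hi j

theorem integral_mul_barkerMean (hg : ∀ (σ : Equiv.Perm ι) j y, g j (y ∘ σ) = g (σ j) y)
    (hg0 : ∀ j y, 0 ≤ g j y) (hgm : ∀ j, Measurable (g j)) (hFm : Measurable F) {i : ι}
    (hi : Integrable fun y => g i y * F (y i)) :
    ∫ y, g i y * barkerMean g F y = ∫ y, g i y * F (y i) := by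
  have hterm := integrable_mul_div_sum_mul hg hg0 hgm hFm hi
  have hswap (j : ι) : Integrable fun y => g j y * (g i y / (∑ k, g k y) * F (y i)) := by
    simpa only [mul_div_sum_mul_comp_swap hg] using
      (integrable_comp_perm_iff (Equiv.swap i j)).mpr (hterm j)
  calc ∫ y, g i y * barkerMean g F y
      = ∑ j, ∫ y, g i y * (g j y / (∑ k, g k y) * F (y j)) := by
        simp only [barkerMean, mul_sum]
        exact integral_finsetSum _ fun j _ => hterm j
    _ = ∑ j, ∫ y, g j y * (g i y / (∑ k, g k y) * F (y i)) := by
        refine sum_congr rfl fun j _ => ?_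
        rw [← integral_comp_perm (Equiv.swap i j)]
        simp only [mul_div_sum_mul_comp_swap hg]
    _ = ∫ y, (∑ j, g j y) * (g i y / (∑ k, g k y) * F (y i)) := by
        simp only [sum_mul]
        exact (integral_finsetSum _ fun j _ => hswap j).symm
    _ = ∫ y, g i y * F (y i) := by
        congr 1 with y
        rw [← mul_assoc, sum_mul_div_sum_of_nonneg (fun k _ => hg0 k y) (mem_univ i)]

end Barker

theorem Fin.exists_perm_succAbove_comp {n : ℕ} (σ : Equiv.Perm (Fin (n + 1))) (j : Fin (n + 1)) :
    ∃ τ : Equiv.Perm (Fin n), ∀ l, (σ j).succAbove (τ l) = σ (j.succAbove l) := by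
  have hne : ∀ a, a ≠ j ↔ σ a ≠ σ j := fun a => σ.injective.ne_iff.symm
  refine ⟨(finSuccAboveEquiv j).trans ((σ.subtypeEquiv hne).trans
      (finSuccAboveEquiv (σ j)).symm), fun l => ?_⟩
  have h := congrArg Subtype.val <| (finSuccAboveEquiv (σ j)).apply_symm_apply
    (σ.subtypeEquiv hne ⟨j.succAbove l, j.succAbove_ne l⟩)
  simp only [finSuccAboveEquiv_apply, Equiv.subtypeEquiv_apply] at h
  exact h

section JointDensity

variable {X : Type*} {n : ℕ} {π : X → ℝ} {κ : X → (Fin n → X) → ℝ}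

def jointDensity (π : X → ℝ) (κ : X → (Fin n → X) → ℝ) (j : Fin (n + 1))
    (y : Fin (n + 1) → X) : ℝ :=
  π (y j) * κ (y j) fun l => y (j.succAbove l)

theorem jointDensity_zero_vecCons (x : X) (z : Fin n → X) :
    jointDensity π κ 0 (Matrix.vecCons x z) = π x * κ x z := by
  simp [jointDensity, Fin.zero_succAbove]

theorem jointDensity_comp_perm
    (hκ : ∀ x (z : Fin n → X) (σ : Equiv.Perm (Fin n)), κ x (z ∘ σ) = κ x z)
    (σ : Equiv.Perm (Fin (n + 1))) (j : Fin (n + 1)) (y : Fin (n + 1) → X) :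
    jointDensity π κ j (y ∘ σ) = jointDensity π κ (σ j) y := by
  obtain ⟨τ, hτ⟩ := Fin.exists_perm_succAbove_comp σ j
  have hz : (fun l => y (σ (j.succAbove l))) = (fun l => y ((σ j).succAbove l)) ∘ τ := by
    funext l; simp [hτ l]
  simp only [jointDensity, Function.comp_apply, hz, hκ]

theorem jointDensity_nonneg (hπ : ∀ x, 0 ≤ π x) (hκ : ∀ x z, 0 ≤ κ x z) (j : Fin (n + 1))
    (y : Fin (n + 1) → X) : 0 ≤ jointDensity π κ j y :=
  mul_nonneg (hπ _) (hκ _ _)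

theorem measurable_jointDensity [MeasurableSpace X] (hπ : Measurable π)
    (hκ : Measurable (Function.uncurry κ)) (j : Fin (n + 1)) :
    Measurable (jointDensity π κ j) := by
  have hκj : Measurable fun y : Fin (n + 1) → X =>
      Function.uncurry κ (y j, fun l => y (j.succAbove l)) :=
    hκ.comp (by fun_prop)
  exact (hπ.comp (measurable_pi_apply j)).mul hκj

end JointDensity

section VecCons

variable {X : Type*} {n : ℕ}

theorem piFinSuccAbove_zero_symm_apply [MeasurableSpace X] (p : X × (Fin n → X)) :
    (MeasurableEquiv.piFinSuccAbove (fun _ => X) 0).symm p = Matrix.vecCons p.1 p.2 := by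
  simp [MeasurableEquiv.piFinSuccAbove_symm_apply, Fin.insertNthEquiv, Fin.insertNth_zero',
    Matrix.vecCons]

variable [MeasureSpace X] [SigmaFinite (volume : Measure X)]

theorem integrable_vecCons_iff {H : (Fin (n + 1) → X) → ℝ} :
    Integrable (fun p : X × (Fin n → X) => H (Matrix.vecCons p.1 p.2)) (volume.prod volume) ↔
      Integrable H := by
  have h := (volume_preserving_piFinSuccAbove (fun _ : Fin (n + 1) => X) 0).symm
    |>.integrable_comp_emb (MeasurableEquiv.piFinSuccAbove (fun _ => X) 0).symm.measurableEmbedding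
      (g := H)
  simp only [Function.comp_def, piFinSuccAbove_zero_symm_apply] at h
  exact h

theorem integral_integral_vecCons {H : (Fin (n + 1) → X) → ℝ} (hH : Integrable H) :
    ∫ x, ∫ z, H (Matrix.vecCons x z) = ∫ y, H y := by
  rw [integral_integral (integrable_vecCons_iff.mpr hH), ← Measure.volume_eq_prod,
    ← (volume_preserving_piFinSuccAbove (fun _ : Fin (n + 1) => X) 0).symm.integral_comp' H]
  simp only [piFinSuccAbove_zero_symm_apply]

end VecCons

section Density

variable {X Y : Type*} [MeasureSpace X] [MeasureSpace Y] [SFinite (volume : Measure Y)]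
  {φ : X → ℝ} {κ : X → Y → ℝ}

theorem integrable_prod_mul_density (hφ : Integrable φ) (hκm : Measurable (Function.uncurry κ))
    (hκ0 : ∀ x z, 0 ≤ κ x z) (hκ1 : ∀ x, ∫ z, κ x z = 1) :
    Integrable (fun p : X × Y => φ p.1 * κ p.1 p.2) (volume.prod volume) := by
  have hκi (x : X) : Integrable (κ x) := .of_integral_ne_zero (by simp [hκ1 x])
  have hm : AEStronglyMeasurable (fun p : X × Y => φ p.1 * κ p.1 p.2) (volume.prod volume) :=
    hφ.1.comp_fst.mul hκm.aestronglyMeasurable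
  refine (integrable_prod_iff hm).mpr
    ⟨.of_forall fun x => (hκi x).const_mul (φ x), hφ.norm.congr (.of_forall fun x => ?_)⟩
  simp only [norm_mul, Real.norm_of_nonneg (hκ0 x _), integral_const_mul, hκ1 x, mul_one]

end Density

section MultipleProposal

variable {X : Type*} [MeasureSpace X] [SigmaFinite (volume : Measure X)] {n : ℕ}
  {π f : X → ℝ} {κ : X → (Fin n → X) → ℝ}

theorem integrable_jointDensity_zero_mul (hfπ : Integrable fun x => f x * π x)
    (hκm : Measurable (Function.uncurry κ)) (hκ0 : ∀ x z, 0 ≤ κ x z)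
    (hκ1 : ∀ x, ∫ z, κ x z = 1) :
    Integrable fun y => jointDensity π κ 0 y * f (y 0) := by
  refine integrable_vecCons_iff.mp ?_
  simpa only [jointDensity_zero_vecCons, Matrix.cons_val_zero, mul_right_comm _ _ (f _),
    mul_comm (f _)] using integrable_prod_mul_density hfπ hκm hκ0 hκ1

theorem integral_jointDensity_zero_mul (hfπ : Integrable fun x => f x * π x)
    (hκm : Measurable (Function.uncurry κ)) (hκ0 : ∀ x z, 0 ≤ κ x z)
    (hκ1 : ∀ x, ∫ z, κ x z = 1) :
    ∫ y, jointDensity π κ 0 y * f (y 0) = ∫ x, f x * π x := by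
  rw [← integral_integral_vecCons (integrable_jointDensity_zero_mul hfπ hκm hκ0 hκ1)]
  congr 1 with x
  simp only [jointDensity_zero_vecCons, Matrix.cons_val_zero, mul_right_comm _ _ (f x),
    integral_const_mul, hκ1 x, mul_one]
  exact mul_comm _ _

end MultipleProposal

theorem mpmcmc_barker_preserves_target_general
    (D N : ℕ)
    (π : (Fin D → ℝ) → ℝ)
    (hπm : Measurable π) (hπ0 : ∀ x, 0 ≤ π x)
    (κ : (Fin D → ℝ) → (Fin N → Fin D → ℝ) → ℝ)
    (hκm : Measurable (Function.uncurry κ))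
    (hκ0 : ∀ x z, 0 ≤ κ x z)
    (hκ1 : ∀ x : Fin D → ℝ, ∫ z : Fin N → Fin D → ℝ, κ x z = 1)
    (hκexch : ∀ (x : Fin D → ℝ) (z : Fin N → Fin D → ℝ) (σ : Equiv.Perm (Fin N)),
      κ x (z ∘ σ) = κ x z)
    (f : (Fin D → ℝ) → ℝ) (hfm : Measurable f)
    (hfi : ∫⁻ x : Fin D → ℝ, ENNReal.ofReal (|f x| * π x) < ⊤) :
    (∫ x : Fin D → ℝ, ∫ z : Fin N → Fin D → ℝ,
        π x * κ x z *
          ∑ j : Fin (N + 1),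
            (π (Matrix.vecCons x z j) *
                κ (Matrix.vecCons x z j) (fun l => Matrix.vecCons x z (j.succAbove l)) /
              ∑ k : Fin (N + 1),
                π (Matrix.vecCons x z k) *
                  κ (Matrix.vecCons x z k) (fun l => Matrix.vecCons x z (k.succAbove l))) *
            f (Matrix.vecCons x z j))
      = ∫ x : Fin D → ℝ, f x * π x := by
  have hfπ : Integrable fun x => f x * π x := by
    refine ⟨(hfm.mul hπm).aestronglyMeasurable, (hasFiniteIntegral_iff_norm _).mpr ?_⟩
    simpa only [norm_mul, Real.norm_eq_abs, abs_of_nonneg (hπ0 _)] using hfi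
  have hg := jointDensity_comp_perm hκexch (π := π)
  have hg0 := jointDensity_nonneg hπ0 hκ0
  have hgm := measurable_jointDensity hπm hκm
  have h0 := integrable_jointDensity_zero_mul hfπ hκm hκ0 hκ1
  calc _ = ∫ x, ∫ z, jointDensity π κ 0 (Matrix.vecCons x z) *
        barkerMean (jointDensity π κ) f (Matrix.vecCons x z) := by
        simp only [jointDensity_zero_vecCons]; rfl
    _ = ∫ y, jointDensity π κ 0 y * barkerMean (jointDensity π κ) f y :=
        integral_integral_vecCons (integrable_mul_barkerMean hg hg0 hgm hfm h0)
    _ = ∫ y, jointDensity π κ 0 y * f (y 0) := integral_mul_barkerMean hg hg0 hgm hfm h0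
    _ = ∫ x, f x * π x := integral_jointDensity_zero_mul hfπ hκm hκ0 hκ1

/-- One complete iteration of multiple-proposal MCMC with Barker weights preserves the
target distribution `π`, assuming the proposal density `κ` is exchangeable in its `N`
proposed points. Here `Matrix.vecCons x z` is the tuple `y = (x, z₁, …, z_N)` and the Barker
weight of `y_j` is `π(y_j) κ(y_j, y_{∖j}) / ∑ₖ π(y_k) κ(y_k, y_{∖k})` (interpreted as `0`
when the denominator vanishes, which is the convention of real division in Lean). -/
theorem mpmcmc_barker_preserves_target
    (D N : ℕ) (hD : 1 ≤ D) (hN : 1 ≤ N)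
    (π : (Fin D → ℝ) → ℝ)
    (hπm : Measurable π) (hπ0 : ∀ x, 0 ≤ π x)
    (hπ1 : ∫ x : Fin D → ℝ, π x = 1)
    (κ : (Fin D → ℝ) → (Fin N → Fin D → ℝ) → ℝ)
    (hκm : Measurable (Function.uncurry κ))
    (hκ0 : ∀ x z, 0 ≤ κ x z)
    (hκ1 : ∀ x : Fin D → ℝ, ∫ z : Fin N → Fin D → ℝ, κ x z = 1)
    (hκexch : ∀ (x : Fin D → ℝ) (z : Fin N → Fin D → ℝ) (σ : Equiv.Perm (Fin N)),
      κ x (z ∘ σ) = κ x z)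
    (f : (Fin D → ℝ) → ℝ) (hfm : Measurable f)
    (hfi : ∫⁻ x : Fin D → ℝ, ENNReal.ofReal (|f x| * π x) < ⊤) :
    (∫ x : Fin D → ℝ, ∫ z : Fin N → Fin D → ℝ,
        π x * κ x z *
          ∑ j : Fin (N + 1),
            (π (Matrix.vecCons x z j) *
                κ (Matrix.vecCons x z j) (fun l => Matrix.vecCons x z (j.succAbove l)) /
              ∑ k : Fin (N + 1),
                π (Matrix.vecCons x z k) *
                  κ (Matrix.vecCons x z k) (fun l => Matrix.vecCons x z (k.succAbove l))) *
            f (Matrix.vecCons x z j))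
      = ∫ x : Fin D → ℝ, f x * π x :=
  mpmcmc_barker_preserves_target_general D N π hπm hπ0 κ hκm hκ0 hκ1 hκexch f hfm hfi
end

section
/- Unbiasedness of the importance-sampling multiple-proposal estimator under the stationary joint distribution: for every measurable f : ℝ^D → ℝ with ∫_{ℝ^D} |f(x)| π(x) dx < ∞, the expectation of the importance-sampling estimate ∑_{i=1}^{N+1} w_i(y) f(y_i) under the joint stationary density p(y) = (1/(N+1)) S(y) on (ℝ^D)^{N+1} equals the target integral, i.e. ∫_{(ℝ^D)^{N+1}} ( ∑_{i=1}^{N+1} w_i(y) f(y_i) ) · (1/(N+1)) S(y) dy = ∫_{ℝ^D} f(x) π(x) dx. -/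
/-!
Expanding the Barker weights, the factor `S(y)` cancels, so the integrand is
`(N+1)⁻¹ ∑ᵢ f(yᵢ) π(yᵢ) κ(yᵢ, y_{∖i})`. Singling out the coordinate `i` identifies
`(ℝ^D)^{N+1}` with `ℝ^D × (ℝ^D)^N` measure-preservingly, so each of the `N + 1` summands
integrates to `∫∫ f(x) π(x) κ(x, z) dz dx = ∫ f π`, because `κ(x, ·)` is a probability density.
-/

open MeasureTheory

theorem Finset.sum_div_sum_mul_mul_sum {ι K : Type*} [Field K] [LinearOrder K]
    [IsStrictOrderedRing K] (s : Finset ι) {a : ι → K} (b : ι → K) (ha : ∀ i ∈ s, 0 ≤ a i) :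
    (∑ i ∈ s, a i / (∑ k ∈ s, a k) * b i) * ∑ k ∈ s, a k = ∑ i ∈ s, a i * b i := by
  by_cases hS : ∑ k ∈ s, a k = 0
  · have hzero := (Finset.sum_eq_zero_iff_of_nonneg ha).1 hS
    rw [hS, mul_zero, Finset.sum_eq_zero fun i hi => by rw [hzero i hi, zero_mul]]
  · rw [Finset.sum_mul]
    exact Finset.sum_congr rfl fun i _ => by field_simp

section ProbabilityDensity

variable {α β : Type*} [MeasurableSpace α] [MeasurableSpace β] {μ : Measure α} {ν : Measure β}
  [SFinite ν] {h : α → ℝ} {κ : α → β → ℝ}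

theorem integrable_mul_density (hh : Integrable h μ)
    (hκm : AEStronglyMeasurable (Function.uncurry κ) (μ.prod ν)) (hκ0 : ∀ x z, 0 ≤ κ x z)
    (hκ1 : ∀ x, ∫ z, κ x z ∂ν = 1) :
    Integrable (fun p : α × β => h p.1 * κ p.1 p.2) (μ.prod ν) := by
  have hκint (x : α) : Integrable (κ x) ν :=
    Integrable.of_integral_ne_zero (by rw [hκ1]; exact one_ne_zero)
  have hnorm (x : α) : ∫ z, ‖h x * κ x z‖ ∂ν = ‖h x‖ := by
    simp_rw [norm_mul, Real.norm_of_nonneg (hκ0 x _)]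
    rw [integral_const_mul, hκ1, mul_one]
  have hm : AEStronglyMeasurable (fun p : α × β => h p.1 * κ p.1 p.2) (μ.prod ν) :=
    hh.aestronglyMeasurable.comp_fst.mul hκm
  refine (integrable_prod_iff hm).2
    ⟨ae_of_all _ fun x => (hκint x).const_mul (h x), ?_⟩
  simpa only [hnorm] using hh.norm

theorem integral_mul_density [SFinite μ] (hh : Integrable h μ)
    (hκm : AEStronglyMeasurable (Function.uncurry κ) (μ.prod ν)) (hκ0 : ∀ x z, 0 ≤ κ x z)
    (hκ1 : ∀ x, ∫ z, κ x z ∂ν = 1) :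
    ∫ p, h p.1 * κ p.1 p.2 ∂(μ.prod ν) = ∫ x, h x ∂μ := by
  rw [integral_prod _ (integrable_mul_density hh hκm hκ0 hκ1)]
  simp_rw [integral_const_mul, hκ1, mul_one]

end ProbabilityDensity

theorem integral_sum_comp_piFinSuccAbove {α E : Type*} [MeasurableSpace α]
    [NormedAddCommGroup E] [NormedSpace ℝ E] (μ : Measure α) [SigmaFinite μ] {N : ℕ}
    {g : α × (Fin N → α) → E} (hg : Integrable g (μ.prod (Measure.pi fun _ => μ))) :
    ∫ y, ∑ i : Fin (N + 1), g (y i, fun l => y (i.succAbove l)) ∂(Measure.pi fun _ => μ)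
      = (N + 1) • ∫ p, g p ∂(μ.prod (Measure.pi fun _ => μ)) := by
  have hmp (i : Fin (N + 1)) := measurePreserving_piFinSuccAbove (fun _ => μ) i
  have hterm (i : Fin (N + 1)) :
      ∫ y, g (y i, fun l => y (i.succAbove l)) ∂(Measure.pi fun _ => μ)
        = ∫ p, g p ∂(μ.prod (Measure.pi fun _ => μ)) :=
    (hmp i).integral_comp' g
  have hint (i : Fin (N + 1)) :
      Integrable (fun y => g (y i, fun l => y (i.succAbove l))) (Measure.pi fun _ => μ) :=
    ((hmp i).integrable_comp_emb (MeasurableEquiv.measurableEmbedding _)).2 hg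
  rw [integral_finsetSum _ fun i _ => hint i]
  simp only [hterm, Finset.sum_const, Finset.card_univ, Fintype.card_fin]

theorem is_mpmcmc_unbiased_general
    (D N : ℕ)
    (π : (Fin D → ℝ) → ℝ)
    (hπm : Measurable π) (hπ0 : ∀ x, 0 ≤ π x)
    (κ : (Fin D → ℝ) → (Fin N → Fin D → ℝ) → ℝ)
    (hκm : Measurable (Function.uncurry κ))
    (hκ0 : ∀ x z, 0 ≤ κ x z)
    (hκ1 : ∀ x : Fin D → ℝ, ∫ z : Fin N → Fin D → ℝ, κ x z = 1)
    (f : (Fin D → ℝ) → ℝ) (hfm : Measurable f)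
    (hfi : ∫⁻ x : Fin D → ℝ, ENNReal.ofReal (|f x| * π x) < ⊤) :
    (∫ y : Fin (N + 1) → Fin D → ℝ,
        (∑ i : Fin (N + 1),
          (π (y i) * κ (y i) (fun l => y (i.succAbove l)) /
            ∑ k : Fin (N + 1), π (y k) * κ (y k) (fun l => y (k.succAbove l))) *
          f (y i)) *
        ((1 / ((N : ℝ) + 1)) *
          ∑ k : Fin (N + 1), π (y k) * κ (y k) (fun l => y (k.succAbove l))))
      = ∫ x : Fin D → ℝ, f x * π x := by
  have hfπ : Integrable (fun x => f x * π x) := by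
    refine ⟨(hfm.mul hπm).aestronglyMeasurable, (hasFiniteIntegral_iff_norm _).2 ?_⟩
    simpa only [norm_mul, Real.norm_eq_abs, abs_of_nonneg (hπ0 _)] using hfi
  set g : (Fin D → ℝ) × (Fin N → Fin D → ℝ) → ℝ := fun p => f p.1 * π p.1 * κ p.1 p.2
  have hbarker (y : Fin (N + 1) → Fin D → ℝ) :
      (∑ i : Fin (N + 1),
          (π (y i) * κ (y i) (fun l => y (i.succAbove l)) /
            ∑ k : Fin (N + 1), π (y k) * κ (y k) (fun l => y (k.succAbove l))) *
          f (y i)) *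
        ((1 / ((N : ℝ) + 1)) *
          ∑ k : Fin (N + 1), π (y k) * κ (y k) (fun l => y (k.succAbove l)))
      = 1 / ((N : ℝ) + 1) *
          ∑ i : Fin (N + 1), g (y i, fun l => y (i.succAbove l)) := by
    rw [mul_left_comm, Finset.sum_div_sum_mul_mul_sum _ _ fun i _ =>
      mul_nonneg (hπ0 _) (hκ0 _ _)]
    simp only [g, mul_comm, mul_left_comm]
  have hg : Integrable g (volume.prod (Measure.pi fun _ => volume)) :=
    integrable_mul_density hfπ hκm.aestronglyMeasurable hκ0 hκ1
  have hg_integral : ∫ p, g p ∂(volume.prod (Measure.pi fun _ => volume)) = ∫ x, f x * π x :=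
    integral_mul_density hfπ hκm.aestronglyMeasurable hκ0 hκ1
  rw [integral_congr_ae (ae_of_all _ hbarker), integral_const_mul, volume_pi,
    integral_sum_comp_piFinSuccAbove volume hg, hg_integral, nsmul_eq_mul, Nat.cast_succ]
  field_simp

/-- Unbiasedness of the importance-sampling multiple-proposal estimator under the
stationary joint density `p(y) = S(y)/(N+1)` on `(ℝ^D)^{N+1}`, where
`S(y) = ∑ₖ π(y_k) κ(y_k, y_{∖k})` and the Barker weights are
`w_i(y) = π(y_i) κ(y_i, y_{∖i}) / S(y)` (equal to `0` when `S(y) = 0`, by the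
convention of real division in Lean). -/
theorem is_mpmcmc_unbiased
    (D N : ℕ) (hD : 1 ≤ D) (hN : 1 ≤ N)
    (π : (Fin D → ℝ) → ℝ)
    (hπm : Measurable π) (hπ0 : ∀ x, 0 ≤ π x)
    (hπ1 : ∫ x : Fin D → ℝ, π x = 1)
    (κ : (Fin D → ℝ) → (Fin N → Fin D → ℝ) → ℝ)
    (hκm : Measurable (Function.uncurry κ))
    (hκ0 : ∀ x z, 0 ≤ κ x z)
    (hκ1 : ∀ x : Fin D → ℝ, ∫ z : Fin N → Fin D → ℝ, κ x z = 1)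
    (f : (Fin D → ℝ) → ℝ) (hfm : Measurable f)
    (hfi : ∫⁻ x : Fin D → ℝ, ENNReal.ofReal (|f x| * π x) < ⊤) :
    (∫ y : Fin (N + 1) → Fin D → ℝ,
        (∑ i : Fin (N + 1),
          (π (y i) * κ (y i) (fun l => y (i.succAbove l)) /
            ∑ k : Fin (N + 1), π (y k) * κ (y k) (fun l => y (k.succAbove l))) *
          f (y i)) *
        ((1 / ((N : ℝ) + 1)) *
          ∑ k : Fin (N + 1), π (y k) * κ (y k) (fun l => y (k.succAbove l))))
      = ∫ x : Fin D → ℝ, f x * π x :=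
  is_mpmcmc_unbiased_general D N π hπm hπ0 κ hκm hκ0 hκ1 f hfm hfi
end

section
/- Uniform distribution of stacked blocks of a CUD sequence (auxiliary technicality): let (v_n)_{n≥0} be a CUD sequence in [0,1], and fix integers d ≥ 1 and k ≥ 1. For i ≥ 0 define the point x_i ∈ [0,1]^{d·k} whose (j,l)-th coordinate (0 ≤ j < k, 0 ≤ l < d) equals v_{(i+j)·d + l}, i.e. x_i stacks k consecutive non-overlapping d-blocks of (v_n) starting at block i. Then the points (x_i) are uniformly distributed on [0,1]^{d·k} in the sense that for every pair a, b ∈ [0,1]^{d·k} with a ≤ b coordinatewise, (1/n) · #{0 ≤ i < n : a_m < (x_i)_m ≤ b_m for every coordinate m} converges to ∏_m (b_m − a_m) as n → ∞. -/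
open scoped Classical

/-- A sequence `(v_n)` in `[0,1]` is completely uniformly distributed (CUD) if for every
dimension `d ≥ 1` and every `a ∈ [0,1]^d`, the proportion of overlapping `d`-blocks
`(v_i, …, v_{i+d-1})` lying in the box `∏ⱼ (0, aⱼ]` converges to `∏ⱼ aⱼ`. -/
def IsCUD (v : ℕ → ℝ) : Prop :=
  ∀ d : ℕ, 1 ≤ d → ∀ a : Fin d → ℝ, (∀ j, a j ∈ Set.Icc (0 : ℝ) 1) →
    Filter.Tendsto
      (fun n : ℕ => (1 / (n : ℝ)) *
        ((Finset.range n).filter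
          (fun i => ∀ j : Fin d, v (i + (j : ℕ)) ∈ Set.Ioc (0 : ℝ) (a j))).card)
      Filter.atTop (nhds (∏ j, a j))

/-!
Let `f j` indicate that the overlapping block of length `k d` starting at `j` lies in the box, and
let `μ` be the volume of the box. Inclusion–exclusion over anchored boxes `(0, c]` shows that `f`
has Cesàro mean `μ`, and two blocks at distance at least `k d` are asymptotically independent:
joining them by a gap constrained to `(0, 1]` loses only a set of indices of density zero. So
`h = f - μ` has vanishing mean correlations at every lag `t k d` with `t ≥ 1`. For the windows
`W j = ∑_{t<M} h (j + t k d)` this gives `∑_{j<N} W j ^ 2 ≤ (M + 1) N`; restricting to `j = i d`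
and applying Cauchy–Schwarz, while `∑_{i<n} W (i d)` differs from `M ∑_{i<n} h (i d)` by
`O(M² k)` since the lags are multiples of the stride `d`, gives
`((1/n) ∑_{i<n} h (i d))² ≤ 4 d / M + O((M k / n)²)`. Let `n → ∞`, then `M → ∞`.
-/

open Filter Finset Topology

def HasCesaroLimit (g : ℕ → ℝ) (L : ℝ) : Prop :=
  Tendsto (fun n : ℕ => (1 / (n : ℝ)) * ∑ j ∈ range n, g j) atTop (𝓝 L)

lemma abs_sum_range_shift_sub_le {g : ℕ → ℝ} {C : ℝ} (hg : ∀ j, |g j| ≤ C) (c n : ℕ) :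
    |∑ j ∈ range n, g (j + c) - ∑ j ∈ range n, g j| ≤ 2 * c * C := by
  have hsplit : ∑ j ∈ range n, g (j + c) - ∑ j ∈ range n, g j
      = ∑ j ∈ range c, (g (n + j) - g j) := by
    have h₁ := sum_range_add g c n
    have h₂ := sum_range_add g n c
    rw [add_comm c n, h₂] at h₁
    simp only [sum_sub_distrib, add_comm _ c]
    linarith
  rw [hsplit]
  calc |∑ j ∈ range c, (g (n + j) - g j)| ≤ ∑ j ∈ range c, |g (n + j) - g j| :=
        abs_sum_le_sum_abs _ _
    _ ≤ ∑ _j ∈ range c, 2 * C := sum_le_sum fun j _ =>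
        (abs_sub _ _).trans (by linarith [hg (n + j), hg j])
    _ = 2 * c * C := by rw [sum_const, card_range, nsmul_eq_mul]; ring

namespace HasCesaroLimit

variable {g g' : ℕ → ℝ} {L L' : ℝ}

lemma congr (h : HasCesaroLimit g L) (hg : ∀ j, g j = g' j) : HasCesaroLimit g' L := by
  simpa only [HasCesaroLimit, hg] using h

lemma const (c : ℝ) : HasCesaroLimit (fun _ => c) c := by
  refine tendsto_const_nhds.congr' ?_
  filter_upwards [eventually_ne_atTop 0] with n hn
  rw [sum_const, card_range, nsmul_eq_mul]
  field_simp

lemma add (h : HasCesaroLimit g L) (h' : HasCesaroLimit g' L') :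
    HasCesaroLimit (fun j => g j + g' j) (L + L') := by
  simpa only [HasCesaroLimit, sum_add_distrib, mul_add] using Tendsto.add h h'

lemma const_mul (h : HasCesaroLimit g L) (c : ℝ) :
    HasCesaroLimit (fun j => c * g j) (c * L) := by
  simpa only [HasCesaroLimit, ← mul_sum, mul_left_comm c] using Tendsto.const_mul c h

lemma sub (h : HasCesaroLimit g L) (h' : HasCesaroLimit g' L') :
    HasCesaroLimit (fun j => g j - g' j) (L - L') := by
  simpa only [sub_eq_add_neg, neg_mul_eq_neg_mul, neg_one_mul] using h.add (h'.const_mul (-1))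

lemma sum {ι : Type*} (s : Finset ι) {G : ι → ℕ → ℝ} {M : ι → ℝ}
    (h : ∀ i ∈ s, HasCesaroLimit (G i) (M i)) :
    HasCesaroLimit (fun j => ∑ i ∈ s, G i j) (∑ i ∈ s, M i) := by
  have := tendsto_finsetSum s h
  simpa only [HasCesaroLimit, mul_sum, sum_comm (s := s)] using this

lemma of_abs_le (h : HasCesaroLimit g 0) (hg' : ∀ j, |g' j| ≤ g j) : HasCesaroLimit g' 0 := by
  refine squeeze_zero_norm (fun n => ?_) h
  rw [Real.norm_eq_abs, abs_mul, abs_of_nonneg (by positivity)]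
  exact mul_le_mul_of_nonneg_left ((abs_sum_le_sum_abs _ _).trans (sum_le_sum fun j _ => hg' j))
    (by positivity)

lemma comp_add_right {C : ℝ} (hg : ∀ j, |g j| ≤ C) (h : HasCesaroLimit g L) (c : ℕ) :
    HasCesaroLimit (fun j => g (j + c)) L := by
  have hdiff : Tendsto (fun n : ℕ => (1 / (n : ℝ)) *
      (∑ j ∈ range n, g (j + c) - ∑ j ∈ range n, g j)) atTop (𝓝 0) := by
    refine squeeze_zero_norm (fun n => ?_) (tendsto_const_div_atTop_nhds_zero_nat (2 * c * C))
    rw [Real.norm_eq_abs, abs_mul, abs_of_nonneg (by positivity), one_div_mul_eq_div]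
    exact div_le_div_of_nonneg_right (abs_sum_range_shift_sub_le hg c n) n.cast_nonneg
  simpa only [HasCesaroLimit, mul_sub, add_sub_cancel, add_zero] using Tendsto.add h hdiff

end HasCesaroLimit

lemma sum_range_comp_mul_le {M : Type*} [AddCommMonoid M] [PartialOrder M]
    [IsOrderedAddMonoid M] {f : ℕ → M} (hf : ∀ j, 0 ≤ f j) {d : ℕ} (hd : 0 < d) (n : ℕ) :
    ∑ i ∈ range n, f (i * d) ≤ ∑ j ∈ range (n * d), f j := by
  rw [← sum_image fun x _ y _ hxy => Nat.eq_of_mul_eq_mul_right hd hxy]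
  refine sum_le_sum_of_subset_of_nonneg (fun j hj => ?_) fun j _ _ => hf j
  obtain ⟨i, hi, rfl⟩ := mem_image.1 hj
  exact mem_range.2 (Nat.mul_lt_mul_of_pos_right (mem_range.1 hi) hd)

section Correlation

variable {h : ℕ → ℝ} {d k D : ℕ}

lemma hasCesaroLimit_mul_shift_of_ne (hh : ∀ j, |h j| ≤ 1)
    (hcorr : ∀ t, 0 < t → HasCesaroLimit (fun j => h j * h (j + t * D)) 0) {t t' : ℕ}
    (htt' : t ≠ t') : HasCesaroLimit (fun j => h (j + t * D) * h (j + t' * D)) 0 := by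
  wlog hlt : t < t' generalizing t t'
  · exact (this htt'.symm (by omega)).congr fun j => mul_comm _ _
  have hbound : ∀ j, |h j * h (j + (t' - t) * D)| ≤ 1 := fun j => by
    rw [abs_mul]; exact mul_le_one₀ (hh j) (abs_nonneg _) (hh _)
  refine ((hcorr (t' - t) (by omega)).comp_add_right hbound (t * D)).congr fun j => ?_
  rw [add_assoc, ← add_mul, Nat.add_sub_cancel' hlt.le]

lemma eventually_sum_sq_window_le (hh : ∀ j, |h j| ≤ 1)
    (hcorr : ∀ t, 0 < t → HasCesaroLimit (fun j => h j * h (j + t * D)) 0) (M : ℕ) :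
    ∀ᶠ N in atTop,
      ∑ j ∈ range N, (∑ t ∈ range M, h (j + t * D)) ^ 2 ≤ (M + 1) * N := by
  set e : ℕ → ℝ := fun j => ∑ t ∈ range M, ∑ t' ∈ (range M).erase t,
    h (j + t * D) * h (j + t' * D)
  have he : HasCesaroLimit e 0 := by
    simpa using HasCesaroLimit.sum _ fun t _ => HasCesaroLimit.sum _ fun t' ht' =>
      hasCesaroLimit_mul_shift_of_ne hh hcorr (ne_of_mem_erase ht').symm
  have hsq : ∀ j, (∑ t ∈ range M, h (j + t * D)) ^ 2 ≤ M + e j := fun j => by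
    have hdiag : ∑ t ∈ range M, h (j + t * D) * h (j + t * D) ≤ M := by
      simpa using sum_le_card_nsmul (range M) (fun t => h (j + t * D) * h (j + t * D)) 1
        fun t _ => by rw [← sq]; exact (sq_le_one_iff_abs_le_one _).2 (hh _)
    calc (∑ t ∈ range M, h (j + t * D)) ^ 2
        = ∑ t ∈ range M, ∑ t' ∈ range M, h (j + t * D) * h (j + t' * D) := by
          rw [sq, sum_mul_sum]
      _ = ∑ t ∈ range M, h (j + t * D) * h (j + t * D) + e j := by
          rw [← sum_add_distrib]
          exact sum_congr rfl fun t ht => (add_sum_erase _ _ ht).symm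
      _ ≤ M + e j := by linarith
  filter_upwards [he.eventually (gt_mem_nhds one_pos), eventually_gt_atTop 0] with N hN hN₀
  rw [one_div_mul_eq_div, div_lt_one (by positivity)] at hN
  calc ∑ j ∈ range N, (∑ t ∈ range M, h (j + t * D)) ^ 2 ≤ ∑ j ∈ range N, (M + e j) :=
        sum_le_sum fun j _ => hsq j
    _ ≤ (M + 1) * N := by
        rw [sum_add_distrib, sum_const, card_range, nsmul_eq_mul]; linarith

lemma abs_sum_window_stride_sub_le (hh : ∀ j, |h j| ≤ 1) (M n : ℕ) :
    |∑ i ∈ range n, ∑ t ∈ range M, h (i * d + t * (k * d)) - M * ∑ i ∈ range n, h (i * d)|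
      ≤ 2 * M ^ 2 * k := by
  have hshift : ∀ i t, i * d + t * (k * d) = (i + t * k) * d := fun i t => by ring
  calc _ = |∑ t ∈ range M, (∑ i ∈ range n, h ((i + t * k) * d) - ∑ i ∈ range n, h (i * d))| := by
        simp only [sum_sub_distrib, sum_const, card_range, nsmul_eq_mul, hshift]
        rw [sum_comm]
    _ ≤ ∑ t ∈ range M, 2 * ((t * k : ℕ) : ℝ) * 1 :=
        (abs_sum_le_sum_abs _ _).trans (sum_le_sum fun t _ =>
          abs_sum_range_shift_sub_le (g := fun i => h (i * d)) (fun _ => hh _) _ n)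
    _ ≤ ∑ _t ∈ range M, 2 * (M * k : ℝ) := sum_le_sum fun t ht => by
        have : (t : ℝ) ≤ M := by exact_mod_cast (mem_range.1 ht).le
        push_cast; nlinarith [(k.cast_nonneg : (0 : ℝ) ≤ k)]
    _ = 2 * M ^ 2 * k := by rw [sum_const, card_range, nsmul_eq_mul]; ring

lemma eventually_sq_cesaro_stride_le (hh : ∀ j, |h j| ≤ 1) (hd : 0 < d)
    (hcorr : ∀ t, 0 < t → HasCesaroLimit (fun j => h j * h (j + t * (k * d))) 0) {M : ℕ}
    (hM : 0 < M) :
    ∀ᶠ n : ℕ in atTop, ((1 / (n : ℝ)) * ∑ i ∈ range n, h (i * d)) ^ 2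
      ≤ 8 * (M * k / n) ^ 2 + 4 * d / M := by
  have hmul : Tendsto (· * d) atTop atTop := tendsto_id.atTop_mul_const' hd
  filter_upwards [hmul.eventually (eventually_sum_sq_window_le hh hcorr M),
    eventually_gt_atTop 0] with n hvar hn
  set S := ∑ i ∈ range n, h (i * d)
  set X := ∑ i ∈ range n, ∑ t ∈ range M, h (i * d + t * (k * d))
  have hX : X ^ 2 ≤ n * ((M + 1) * (n * d)) := by
    calc X ^ 2 ≤ n * ∑ i ∈ range n, (∑ t ∈ range M, h (i * d + t * (k * d))) ^ 2 := by
          simpa using sq_sum_le_card_mul_sum_sq (s := range n)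
      _ ≤ n * ((M + 1) * (n * d)) := by
          gcongr
          exact (sum_range_comp_mul_le (fun j => sq_nonneg _) hd n).trans
            (hvar.trans_eq (by push_cast; ring))
  have hdiff := abs_sum_window_stride_sub_le (d := d) (k := k) hh M n
  have hMR : (1 : ℝ) ≤ M := by exact_mod_cast hM
  have hnR : (0 : ℝ) < n := by exact_mod_cast hn
  have hdiff_sq : (X - M * S) ^ 2 ≤ (2 * M ^ 2 * k) ^ 2 :=
    sq_le_sq' (abs_le.1 hdiff).1 (abs_le.1 hdiff).2
  have hMS : (M * S) ^ 2 ≤ 8 * M ^ 4 * k ^ 2 + 4 * M * d * n ^ 2 :=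
    calc ((M : ℝ) * S) ^ 2 ≤ 2 * (X - M * S) ^ 2 + 2 * X ^ 2 := by
          nlinarith [sq_nonneg (X + (X - M * S))]
      _ ≤ 2 * (2 * (M : ℝ) ^ 2 * k) ^ 2 + 2 * (n * ((M + 1) * (n * d))) := by
          linarith
      _ ≤ 8 * M ^ 4 * k ^ 2 + 4 * M * d * n ^ 2 := by
          nlinarith [mul_nonneg (d.cast_nonneg (α := ℝ)) (sq_nonneg (n : ℝ))]
  calc (1 / (n : ℝ) * S) ^ 2 = (M * S) ^ 2 / ((M : ℝ) ^ 2 * (n : ℝ) ^ 2) := by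
        field_simp
    _ ≤ (8 * M ^ 4 * k ^ 2 + 4 * M * d * n ^ 2) / ((M : ℝ) ^ 2 * (n : ℝ) ^ 2) := by gcongr
    _ = 8 * ((M : ℝ) * k / n) ^ 2 + 4 * d / M := by field_simp

lemma hasCesaroLimit_comp_mul_of_correlation (hh : ∀ j, |h j| ≤ 1) (hd : 0 < d)
    (hcorr : ∀ t, 0 < t → HasCesaroLimit (fun j => h j * h (j + t * (k * d))) 0) :
    HasCesaroLimit (fun i => h (i * d)) 0 := by
  refine Metric.tendsto_nhds.2 fun ε hε => ?_
  obtain ⟨M, hM⟩ := exists_nat_gt (8 * d / ε ^ 2)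
  have hM₀ : 0 < M := by exact_mod_cast (div_nonneg (by positivity) (by positivity)).trans_lt hM
  have hvar : 4 * d / M < ε ^ 2 / 2 := by
    rw [div_lt_iff₀ (by exact_mod_cast hM₀)]
    rw [div_lt_iff₀ (by positivity)] at hM
    linarith
  have hbias : Tendsto (fun n : ℕ => 8 * ((M : ℝ) * k / n) ^ 2) atTop (𝓝 0) := by
    simpa using ((tendsto_const_div_atTop_nhds_zero_nat ((M : ℝ) * k)).pow 2).const_mul 8
  filter_upwards [eventually_sq_cesaro_stride_le hh hd hcorr hM₀,
    hbias.eventually (gt_mem_nhds (by positivity : (0 : ℝ) < ε ^ 2 / 2))] with n hn hn'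
  rw [Real.dist_eq, sub_zero]
  exact abs_lt_of_sq_lt_sq (by linarith) hε.le

end Correlation

noncomputable def blockIndicator (v : ℕ → ℝ) {D : ℕ} (a b : Fin D → ℝ) (j : ℕ) : ℝ :=
  ∏ m : Fin D, (Set.Ioc (a m) (b m)).indicator 1 (v (j + m))

section blockIndicator

variable {v : ℕ → ℝ} {D : ℕ} {a b : Fin D → ℝ}

lemma blockIndicator_eq_ite (j : ℕ) :
    blockIndicator v a b j = if ∀ m, v (j + m) ∈ Set.Ioc (a m) (b m) then 1 else 0 := by
  simp only [blockIndicator, Set.indicator_apply, Pi.one_apply, Fintype.prod_boole]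
  congr

lemma blockIndicator_nonneg (j : ℕ) : 0 ≤ blockIndicator v a b j := by
  rw [blockIndicator_eq_ite]; split_ifs <;> norm_num

lemma blockIndicator_le_one (j : ℕ) : blockIndicator v a b j ≤ 1 := by
  rw [blockIndicator_eq_ite]; split_ifs <;> norm_num

lemma abs_blockIndicator_le_one (j : ℕ) : |blockIndicator v a b j| ≤ 1 := by
  rw [abs_of_nonneg (blockIndicator_nonneg j)]; exact blockIndicator_le_one j

lemma blockIndicator_append {D' : ℕ} (a' b' : Fin D' → ℝ) (j : ℕ) :
    blockIndicator v (Fin.append a a') (Fin.append b b') j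
      = blockIndicator v a b j * blockIndicator v a' b' (j + D) := by
  simp only [blockIndicator, Fin.prod_univ_add, Fin.append_left, Fin.append_right,
    Fin.val_castAdd, Fin.val_natAdd, add_assoc]

end blockIndicator

lemma prod_sub_eq_sum_powerset_piecewise {ι α R : Type*} [Fintype ι] [DecidableEq ι]
    [CommRing R] (φ : ι → α → R) (a b : ι → α) :
    ∏ i, (φ i (b i) - φ i (a i))
      = ∑ t ∈ univ.powerset, (-1) ^ #t * ∏ i, φ i (t.piecewise a b i) := by
  rw [prod_sub]
  refine sum_congr rfl fun t _ => ?_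
  rw [mul_assoc, ← prod_mul_prod_compl t, compl_eq_univ_sdiff, mul_comm (∏ i ∈ _ \ t, _)]
  congr 2
  · exact prod_congr rfl fun i hi => by simp [hi]
  · exact prod_congr rfl fun i hi => by simp [mem_compl.1 hi]

lemma indicator_Ioc_eq_sub {α G : Type*} [LinearOrder α] [AddCommGroup G] {c a b : α}
    (hca : c ≤ a) (hab : a ≤ b) (f : α → G) (x : α) :
    (Set.Ioc a b).indicator f x = (Set.Ioc c b).indicator f x - (Set.Ioc c a).indicator f x := by
  rw [← Set.Ioc_union_Ioc_eq_Ioc hca hab,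
    Set.indicator_union_of_disjoint (Set.Ioc_disjoint_Ioc_of_le le_rfl), add_sub_cancel_left]

namespace IsCUD

variable {v : ℕ → ℝ}

lemma hasCesaroLimit_blockIndicator_zero (hcud : IsCUD v) {D : ℕ} {c : Fin D → ℝ}
    (hc : ∀ m, c m ∈ Set.Icc 0 1) : HasCesaroLimit (blockIndicator v 0 c) (∏ m, c m) := by
  rcases Nat.eq_zero_or_pos D with rfl | hD
  · exact (HasCesaroLimit.const 1).congr fun j => by simp [blockIndicator]
  · refine (hcud D hD c hc).congr fun n => ?_
    rw [natCast_card_filter]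
    congr 1
    refine sum_congr rfl fun j _ => ?_
    simp only [blockIndicator_eq_ite, Pi.zero_apply]

lemma hasCesaroLimit_blockIndicator (hcud : IsCUD v) {D : ℕ} {a b : Fin D → ℝ}
    (ha : ∀ m, 0 ≤ a m) (hab : ∀ m, a m ≤ b m) (hb : ∀ m, b m ≤ 1) :
    HasCesaroLimit (blockIndicator v a b) (∏ m, (b m - a m)) := by
  have hexpand : ∀ j, blockIndicator v a b j
      = ∑ t ∈ univ.powerset, (-1) ^ #t * blockIndicator v 0 (t.piecewise a b) j := fun j =>
    (prod_congr rfl fun m _ => indicator_Ioc_eq_sub (ha m) (hab m) _ _).trans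
      (prod_sub_eq_sum_powerset_piecewise
        (fun (m : Fin D) c => (Set.Ioc 0 c).indicator (1 : ℝ → ℝ) (v (j + m))) a b)
  have hbox : ∀ t : Finset (Fin D), ∀ m, t.piecewise a b m ∈ Set.Icc 0 1 := fun t m => by
    by_cases hm : m ∈ t
    · simpa [hm] using ⟨ha m, (hab m).trans (hb m)⟩
    · simpa [hm] using ⟨(ha m).trans (hab m), hb m⟩
  rw [prod_sub_eq_sum_powerset_piecewise (fun _ x => x)]
  exact (HasCesaroLimit.sum _ fun t _ =>
    (hcud.hasCesaroLimit_blockIndicator_zero (hbox t)).const_mul _).congr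
      fun j => (hexpand j).symm

lemma hasCesaroLimit_blockIndicator_mul (hcud : IsCUD v) {D D' : ℕ} {a b : Fin D → ℝ}
    {a' b' : Fin D' → ℝ} (ha : ∀ m, 0 ≤ a m) (hab : ∀ m, a m ≤ b m) (hb : ∀ m, b m ≤ 1)
    (ha' : ∀ m, 0 ≤ a' m) (hab' : ∀ m, a' m ≤ b' m) (hb' : ∀ m, b' m ≤ 1) (L : ℕ) :
    HasCesaroLimit (fun j => blockIndicator v a b j * blockIndicator v a' b' (j + (D + L)))
      ((∏ m, (b m - a m)) * ∏ m, (b' m - a' m)) := by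
  set G : ℕ → ℝ := fun j => blockIndicator v (0 : Fin L → ℝ) 1 (j + D)
  have hG : HasCesaroLimit G 1 := by
    simpa using (hcud.hasCesaroLimit_blockIndicator (a := (0 : Fin L → ℝ)) (b := 1)
      (fun _ => le_rfl) (fun _ => zero_le_one) (fun _ => le_rfl)).comp_add_right
      abs_blockIndicator_le_one D
  have hjoint : HasCesaroLimit
      (fun j => blockIndicator v a b j * G j * blockIndicator v a' b' (j + (D + L)))
      ((∏ m, (b m - a m)) * ∏ m, (b' m - a' m)) := by
    have := hcud.hasCesaroLimit_blockIndicator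
      (a := Fin.append (Fin.append a (0 : Fin L → ℝ)) a')
      (b := Fin.append (Fin.append b (1 : Fin L → ℝ)) b') ?_ ?_ ?_
    · simp only [Fin.prod_univ_add, Fin.append_left, Fin.append_right, Pi.zero_apply,
        Pi.one_apply, sub_zero, prod_const_one, mul_one] at this
      exact this.congr fun j => by
        rw [blockIndicator_append, blockIndicator_append]
    all_goals simp [Fin.forall_fin_add, *]
  have hgap : HasCesaroLimit (fun j =>
      blockIndicator v a b j * blockIndicator v a' b' (j + (D + L)) * (1 - G j)) 0 := by
    refine (sub_self (1 : ℝ) ▸ (HasCesaroLimit.const 1).sub hG).of_abs_le fun j => ?_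
    have hG₁ : 0 ≤ 1 - G j := sub_nonneg.2 (blockIndicator_le_one _)
    have hf := blockIndicator_nonneg (v := v) (a := a) (b := b) j
    have hf' := blockIndicator_nonneg (v := v) (a := a') (b := b') (j + (D + L))
    rw [abs_of_nonneg (by positivity)]
    exact mul_le_of_le_one_left hG₁
      (mul_le_one₀ (blockIndicator_le_one _) hf' (blockIndicator_le_one _))
  simpa using (hjoint.add hgap).congr fun j => by ring

lemma hasCesaroLimit_blockIndicator_comp_mul (hcud : IsCUD v) {d k : ℕ} (hd : 0 < d)
    {a b : Fin (k * d) → ℝ} (ha : ∀ m, 0 ≤ a m) (hab : ∀ m, a m ≤ b m)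
    (hb : ∀ m, b m ≤ 1) :
    HasCesaroLimit (fun i => blockIndicator v a b (i * d)) (∏ m, (b m - a m)) := by
  set f := blockIndicator v a b
  set μ := ∏ m, (b m - a m)
  have hf := hcud.hasCesaroLimit_blockIndicator ha hab hb
  have hμ₀ : 0 ≤ μ := prod_nonneg fun m _ => sub_nonneg.2 (hab m)
  have hμ₁ : μ ≤ 1 := prod_le_one (fun m _ => sub_nonneg.2 (hab m))
    fun m _ => by linarith [ha m, hb m]
  have hcentered : ∀ j, |f j - μ| ≤ 1 := fun j =>
    abs_sub_le_of_nonneg_of_le (blockIndicator_nonneg j) (blockIndicator_le_one j) hμ₀ hμ₁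
  have hcorr : ∀ t, 0 < t →
      HasCesaroLimit (fun j => (f j - μ) * (f (j + t * (k * d)) - μ)) 0 := fun t ht => by
    obtain ⟨s, rfl⟩ : ∃ s, t = s + 1 := ⟨t - 1, by omega⟩
    have hlag : (s + 1) * (k * d) = k * d + s * (k * d) := by ring
    have hpair := hcud.hasCesaroLimit_blockIndicator_mul ha hab hb ha hab hb (s * (k * d))
    have hshift := hf.comp_add_right abs_blockIndicator_le_one (k * d + s * (k * d))
    convert ((hpair.sub (hf.const_mul μ)).sub (hshift.const_mul μ)).add
      (HasCesaroLimit.const (μ * μ)) using 1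
    · ext j; rw [hlag]; ring
    · ring
  simpa using (hasCesaroLimit_comp_mul_of_correlation hcentered hd hcorr).add
    (HasCesaroLimit.const μ)

end IsCUD

lemma blockIndicator_comp_finProdFinEquiv_symm (v : ℕ → ℝ) {k d : ℕ}
    (a b : Fin k × Fin d → ℝ) (i : ℕ) :
    blockIndicator v (a ∘ finProdFinEquiv.symm) (b ∘ finProdFinEquiv.symm) (i * d)
      = if ∀ p : Fin k × Fin d,
          a p < v ((i + p.1) * d + p.2) ∧ v ((i + p.1) * d + p.2) ≤ b p then 1 else 0 := by
  rw [blockIndicator_eq_ite]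
  refine if_congr ?_ rfl rfl
  rw [← finProdFinEquiv.forall_congr_right]
  refine forall_congr' fun p => ?_
  have hidx : i * d + (finProdFinEquiv p : ℕ) = (i + p.1) * d + p.2 := by
    rw [finProdFinEquiv_apply_val]; ring
  simp only [Function.comp_apply, Equiv.symm_apply_apply, Set.mem_Ioc, hidx]

theorem cud_stacked_blocks_general (v : ℕ → ℝ)
    (hcud : IsCUD v) (d k : ℕ)
    (a b : Fin k × Fin d → ℝ)
    (ha : ∀ p, a p ∈ Set.Icc (0 : ℝ) 1) (hb : ∀ p, b p ∈ Set.Icc (0 : ℝ) 1)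
    (hab : ∀ p, a p ≤ b p) :
    Filter.Tendsto
      (fun n : ℕ => (1 / (n : ℝ)) *
        ((Finset.range n).filter
          (fun i => ∀ p : Fin k × Fin d,
            a p < v ((i + (p.1 : ℕ)) * d + (p.2 : ℕ)) ∧
              v ((i + (p.1 : ℕ)) * d + (p.2 : ℕ)) ≤ b p)).card)
      Filter.atTop (nhds (∏ p : Fin k × Fin d, (b p - a p))) := by
  rcases Nat.eq_zero_or_pos d with rfl | hd
  · simpa [HasCesaroLimit] using HasCesaroLimit.const 1
  have hlim := hcud.hasCesaroLimit_blockIndicator_comp_mul hd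
    (a := a ∘ finProdFinEquiv.symm) (b := b ∘ finProdFinEquiv.symm)
    (fun _ => (ha _).1) (fun _ => hab _) (fun _ => (hb _).2)
  rw [show ∏ m, ((b ∘ finProdFinEquiv.symm) m - (a ∘ finProdFinEquiv.symm) m)
      = ∏ p, (b p - a p) from finProdFinEquiv.symm.prod_comp fun p => b p - a p] at hlim
  refine Tendsto.congr (fun n => ?_) hlim
  rw [natCast_card_filter]
  simp only [blockIndicator_comp_finProdFinEquiv_symm]

/-- Uniform distribution of stacked blocks of a CUD sequence: if `(v_n)` is CUD in
`[0,1]`, `d ≥ 1` and `k ≥ 1`, and `x_i ∈ [0,1]^{d·k}` has `(j,l)`-th coordinate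
`v_{(i+j)·d + l}` (stacking `k` consecutive non-overlapping `d`-blocks starting at block
`i`), then for all `a ≤ b` in `[0,1]^{d·k}` the proportion of `i < n` with
`x_i ∈ (a, b]` converges to `∏ (b − a)`. -/
theorem cud_stacked_blocks (v : ℕ → ℝ) (hv : ∀ n, v n ∈ Set.Icc (0 : ℝ) 1)
    (hcud : IsCUD v) (d k : ℕ) (hd : 1 ≤ d) (hk : 1 ≤ k)
    (a b : Fin k × Fin d → ℝ)
    (ha : ∀ p, a p ∈ Set.Icc (0 : ℝ) 1) (hb : ∀ p, b p ∈ Set.Icc (0 : ℝ) 1)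
    (hab : ∀ p, a p ≤ b p) :
    Filter.Tendsto
      (fun n : ℕ => (1 / (n : ℝ)) *
        ((Finset.range n).filter
          (fun i => ∀ p : Fin k × Fin d,
            a p < v ((i + (p.1 : ℕ)) * d + (p.2 : ℕ)) ∧
              v ((i + (p.1 : ℕ)) * d + (p.2 : ℕ)) ≤ b p)).card)
      Filter.atTop (nhds (∏ p : Fin k × Fin d, (b p - a p))) :=
  cud_stacked_blocks_general v hcud d k a b ha hb hab
end

section
/- If the liminf of the empirical rectangle frequencies of a sequence dominates the rectangle volumes, then the frequencies converge to the volumes: let D ≥ 1 and let (x_i)_{i≥0} be a sequence of points in [0,1]^D such that for every pair a, b ∈ [0,1]^D with a ≤ b coordinatewise, liminf_{n→∞} (1/n) · #{0 ≤ i < n : a_m < (x_i)_m ≤ b_m for every coordinate m} ≥ ∏_{m=1}^D (b_m − a_m). Then for every such pair a, b the limit exists and lim_{n→∞} (1/n) · #{0 ≤ i < n : a_m < (x_i)_m ≤ b_m for every m} = ∏_{m=1}^D (b_m − a_m). -/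
/-!
Cut each coordinate of `[0,1]^D` at `0 ≤ a m ≤ b m ≤ 1`. This splits the cube into `3^D`
half-open cells, one of which is `(a, b]`. The cells are disjoint, so their empirical
frequencies sum to at most `1`, while their volumes sum to `1`. The liminf bound for every
other cell therefore turns into `limsup freq (a, b] ≤ 1 - ∑ vol(other cells) = vol (a, b]`.
-/

open Filter Finset Topology

noncomputable def empiricalFreq (P : ℕ → Prop) [DecidablePred P] : ℕ → ℝ :=
  fun n => 1 / (n : ℝ) * #{i ∈ range n | P i}

lemma empiricalFreq_nonneg (P : ℕ → Prop) [DecidablePred P] (n : ℕ) :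
    0 ≤ empiricalFreq P n := by
  unfold empiricalFreq
  positivity

lemma sum_empiricalFreq_le_one {κ : Type*} [Fintype κ] (P : κ → ℕ → Prop)
    [∀ k, DecidablePred (P k)] (hP : ∀ i k l, P k i → P l i → k = l) (n : ℕ) :
    ∑ k, empiricalFreq (P k) n ≤ 1 := by
  have hcard : ∑ k, #{i ∈ range n | P k i} ≤ n := by
    rw [← card_biUnion fun k _ l _ hkl => disjoint_filter.2 fun i _ hk hl => hkl (hP i k l hk hl)]
    exact (card_le_card (biUnion_subset.2 fun k _ => filter_subset _ _)).trans_eq (card_range n)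
  rcases n.eq_zero_or_pos with rfl | hn
  · simp [empiricalFreq]
  · simp only [empiricalFreq, ← mul_sum, one_div]
    rw [inv_mul_le_one₀ (by positivity)]
    exact_mod_cast hcard

lemma le_liminf_sum {α κ : Type*} {l : Filter α} [l.NeBot] (s : Finset κ) (u : κ → α → ℝ)
    (hle : ∀ k ∈ s, l.IsBoundedUnder (· ≤ ·) (u k))
    (hge : ∀ k ∈ s, l.IsBoundedUnder (· ≥ ·) (u k)) :
    ∑ k ∈ s, liminf (u k) l ≤ liminf (fun a => ∑ k ∈ s, u k a) l := by
  induction s using Finset.cons_induction with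
  | empty => simp
  | cons k s hk ih =>
    simp only [forall_mem_cons] at hle hge
    have hsum_le : l.IsBoundedUnder (· ≤ ·) (fun a => ∑ j ∈ s, u j a) := by
      simpa only [sum_fn] using isBoundedUnder_sum (fun _ _ => isBoundedUnder_le_add) le_rfl s hle.2
    have hsum_ge : l.IsBoundedUnder (· ≥ ·) (fun a => ∑ j ∈ s, u j a) := by
      simpa only [sum_fn] using isBoundedUnder_sum (fun _ _ => isBoundedUnder_ge_add) le_rfl s hge.2
    calc ∑ j ∈ cons k s hk, liminf (u j) l
        = liminf (u k) l + ∑ j ∈ s, liminf (u j) l := sum_cons hk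
      _ ≤ liminf (u k) l + liminf (fun a => ∑ j ∈ s, u j a) l := by gcongr; exact ih hle.2 hge.2
      _ ≤ liminf (fun a => ∑ j ∈ cons k s hk, u j a) l := by
        simp only [sum_cons]
        exact le_liminf_add hge.1 hle.1 hsum_ge hsum_le.isCoboundedUnder_ge

/-- The liminf bound on all the other weights is a limsup bound on the remaining one. -/
lemma tendsto_of_le_liminf_of_sum_le_one {α κ : Type*} [Fintype κ] [DecidableEq κ]
    {l : Filter α} [l.NeBot] (u : κ → α → ℝ) (v : κ → ℝ) (hu_nonneg : ∀ k a, 0 ≤ u k a)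
    (hu_sum : ∀ a, ∑ k, u k a ≤ 1)
    (hv_sum : ∑ k, v k = 1) (hv : ∀ k, v k ≤ liminf (u k) l) (k : κ) :
    Tendsto (u k) l (𝓝 (v k)) := by
  set rest := fun a => ∑ j ∈ univ.erase k, u j a
  have hsplit : ∀ a, u k a + rest a ≤ 1 := fun a =>
    (add_sum_erase _ (fun j => u j a) (mem_univ k)).trans_le (hu_sum a)
  have hrest_nonneg : ∀ a, 0 ≤ rest a := fun a => sum_nonneg fun j _ => hu_nonneg j a
  have hbdd_le : ∀ j, l.IsBoundedUnder (· ≤ ·) (u j) := fun j =>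
    isBoundedUnder_of ⟨1, fun a => (single_le_sum (fun i _ => hu_nonneg i a) (mem_univ j)).trans
      (hu_sum a)⟩
  have hbdd_ge : ∀ j, l.IsBoundedUnder (· ≥ ·) (u j) := fun j =>
    isBoundedUnder_of ⟨0, hu_nonneg j⟩
  have hrest : 1 - v k ≤ liminf rest l := calc
    1 - v k = ∑ j ∈ univ.erase k, v j := by
      rw [← hv_sum, ← add_sum_erase _ _ (mem_univ k), add_sub_cancel_left]
    _ ≤ ∑ j ∈ univ.erase k, liminf (u j) l := sum_le_sum fun j _ => hv j
    _ ≤ liminf rest l := le_liminf_sum _ u (fun j _ => hbdd_le j) (fun j _ => hbdd_ge j)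
  have hlimsup : limsup (u k) l ≤ v k := calc
    limsup (u k) l ≤ limsup (fun a => 1 - rest a) l :=
      limsup_le_limsup (Eventually.of_forall fun a => by linarith [hsplit a])
        (hbdd_ge k).isCoboundedUnder_le
        (isBoundedUnder_of ⟨1, fun a => by linarith [hrest_nonneg a]⟩)
    _ = 1 - liminf rest l :=
      limsup_const_sub l rest 1
        (isBoundedUnder_of ⟨1, fun a => by linarith [hsplit a, hu_nonneg k a]⟩).isCoboundedUnder_ge
        (isBoundedUnder_of ⟨0, hrest_nonneg⟩)
    _ ≤ v k := by linarith
  exact tendsto_of_le_liminf_of_limsup_le (hv k) hlimsup (hbdd_le k) (hbdd_ge k)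

lemma Monotone.eq_of_mem_Ioc_succ {k : ℕ} {g : Fin (k + 1) → ℝ} (hg : Monotone g) {y : ℝ}
    {i j : Fin k} (hi : y ∈ Set.Ioc (g i.castSucc) (g i.succ))
    (hj : y ∈ Set.Ioc (g j.castSucc) (g j.succ)) : i = j := by
  have hgap : ∀ {i j : Fin k}, i < j → g i.succ ≤ g j.castSucc := fun h =>
    hg (Fin.succ_le_castSucc_iff.2 h)
  rcases lt_trichotomy i j with h | h | h
  · exact absurd (hi.2.trans (hgap h)) hj.1.not_ge
  · exact h
  · exact absurd (hj.2.trans (hgap h)) hi.1.not_ge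

lemma Fin.sum_succ_sub_castSucc {k : ℕ} (g : Fin (k + 1) → ℝ) :
    ∑ i : Fin k, (g i.succ - g i.castSucc) = g (Fin.last k) - g 0 := by
  induction k with
  | zero => simp
  | succ k ih =>
    have h := ih (fun i => g i.castSucc)
    simp only [Fin.castSucc_zero] at h
    rw [Fin.sum_univ_castSucc]
    simp only [Fin.succ_castSucc, h, Fin.succ_last]
    ring

lemma sum_prod_succ_sub_castSucc {ι : Type*} [Fintype ι] [DecidableEq ι] {k : ℕ}
    (g : ι → Fin (k + 1) → ℝ) :
    ∑ s : ι → Fin k, ∏ m, (g m (s m).succ - g m (s m).castSucc) =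
      ∏ m, (g m (Fin.last k) - g m 0) := by
  simp only [← Fin.sum_succ_sub_castSucc, Fintype.prod_sum]

noncomputable def rectFreq {ι : Type*} [Fintype ι] (x : ℕ → ι → ℝ) (a b : ι → ℝ) : ℕ → ℝ :=
  empiricalFreq fun i => ∀ m, a m < x i m ∧ x i m ≤ b m

/-- For `ι = Fin D` the elaborator decides the predicate by `Nat.decidableForallFin`, not by the
instance built into `rectFreq`. -/
lemma rectFreq_eq {ι : Type*} [Fintype ι] (x : ℕ → ι → ℝ) (a b : ι → ℝ)
    [DecidablePred fun i => ∀ m, a m < x i m ∧ x i m ≤ b m] :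
    rectFreq x a b =
      fun n : ℕ => 1 / (n : ℝ) * #{i ∈ range n | ∀ m, a m < x i m ∧ x i m ≤ b m} := by
  unfold rectFreq empiricalFreq
  congr!

/-- The cells of a grid `g` of `[0,1]^ι` are pairwise disjoint and their volumes sum to `1`. -/
theorem tendsto_rectFreq_of_grid {ι : Type*} [Fintype ι] [DecidableEq ι] (x : ℕ → ι → ℝ)
    (hliminf : ∀ a b : ι → ℝ, a ∈ Set.Icc 0 1 → b ∈ Set.Icc 0 1 → a ≤ b →
      ∏ m, (b m - a m) ≤ liminf (rectFreq x a b) atTop)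
    {k : ℕ} (g : ι → Fin (k + 1) → ℝ) (hg : ∀ m, Monotone (g m)) (hg0 : ∀ m, g m 0 = 0)
    (hg1 : ∀ m, g m (Fin.last k) = 1) (s : ι → Fin k) :
    Tendsto (rectFreq x (fun m => g m (s m).castSucc) (fun m => g m (s m).succ)) atTop
      (𝓝 (∏ m, (g m (s m).succ - g m (s m).castSucc))) := by
  set lo : (ι → Fin k) → ι → ℝ := fun s m => g m (s m).castSucc
  set hi : (ι → Fin k) → ι → ℝ := fun s m => g m (s m).succ
  have hg_mem : ∀ m j, g m j ∈ Set.Icc 0 1 := fun m j =>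
    ⟨hg0 m ▸ hg m (Fin.zero_le j), hg1 m ▸ hg m (Fin.le_last j)⟩
  have hdisj : ∀ i s t, (∀ m, lo s m < x i m ∧ x i m ≤ hi s m) →
      (∀ m, lo t m < x i m ∧ x i m ≤ hi t m) → s = t := fun i s t hs ht =>
    funext fun m => (hg m).eq_of_mem_Ioc_succ (hs m) (ht m)
  have hvol : ∑ s, ∏ m, (hi s m - lo s m) = 1 := by
    simp [hi, lo, sum_prod_succ_sub_castSucc, hg0, hg1]
  have hcell : ∀ s, ∏ m, (hi s m - lo s m) ≤ liminf (rectFreq x (lo s) (hi s)) atTop := fun s =>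
    hliminf _ _ ⟨fun m => (hg_mem m _).1, fun m => (hg_mem m _).2⟩
      ⟨fun m => (hg_mem m _).1, fun m => (hg_mem m _).2⟩ fun m => hg m (Fin.castSucc_le_succ _)
  exact tendsto_of_le_liminf_of_sum_le_one (fun s => rectFreq x (lo s) (hi s))
    (fun s => ∏ m, (hi s m - lo s m)) (fun s => empiricalFreq_nonneg _)
    (sum_empiricalFreq_le_one _ hdisj) hvol hcell s

theorem liminf_rect_freq_to_limit_general (D : ℕ) (x : ℕ → Fin D → ℝ)
    (hliminf : ∀ a b : Fin D → ℝ,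
      a ∈ Set.Icc (0 : Fin D → ℝ) 1 → b ∈ Set.Icc (0 : Fin D → ℝ) 1 → a ≤ b →
      (∏ m, (b m - a m)) ≤
        Filter.liminf
          (fun n : ℕ => (1 / (n : ℝ)) *
            ((Finset.range n).filter
              (fun i => ∀ m, a m < x i m ∧ x i m ≤ b m)).card)
          Filter.atTop) :
    ∀ a b : Fin D → ℝ,
      a ∈ Set.Icc (0 : Fin D → ℝ) 1 → b ∈ Set.Icc (0 : Fin D → ℝ) 1 → a ≤ b →
      Filter.Tendsto
        (fun n : ℕ => (1 / (n : ℝ)) *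
          ((Finset.range n).filter
            (fun i => ∀ m, a m < x i m ∧ x i m ≤ b m)).card)
        Filter.atTop (nhds (∏ m, (b m - a m))) := by
  intro a b ha hb hab
  have hmono : ∀ m, Monotone ![0, a m, b m, 1] := fun m => by
    simpa [hab m] using ⟨ha.1 m, hb.2 m⟩
  simp only [← rectFreq_eq] at hliminf ⊢
  exact tendsto_rectFreq_of_grid x hliminf (fun m => ![0, a m, b m, 1]) hmono (fun _ => rfl)
    (fun _ => rfl) (fun _ => 1)

/-- If the liminf of the empirical rectangle frequencies of a sequence of points in
`[0,1]^D` dominates the rectangle volumes for every half-open rectangle `(a, b]` with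
`a ≤ b` in `[0,1]^D`, then for every such rectangle the frequencies actually converge
to the volume `∏ₘ (bₘ − aₘ)`. -/
theorem liminf_rect_freq_to_limit (D : ℕ) (hD : 1 ≤ D) (x : ℕ → Fin D → ℝ)
    (hx : ∀ i, x i ∈ Set.Icc (0 : Fin D → ℝ) 1)
    (hliminf : ∀ a b : Fin D → ℝ,
      a ∈ Set.Icc (0 : Fin D → ℝ) 1 → b ∈ Set.Icc (0 : Fin D → ℝ) 1 → a ≤ b →
      (∏ m, (b m - a m)) ≤
        Filter.liminf
          (fun n : ℕ => (1 / (n : ℝ)) *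
            ((Finset.range n).filter
              (fun i => ∀ m, a m < x i m ∧ x i m ≤ b m)).card)
          Filter.atTop) :
    ∀ a b : Fin D → ℝ,
      a ∈ Set.Icc (0 : Fin D → ℝ) 1 → b ∈ Set.Icc (0 : Fin D → ℝ) 1 → a ≤ b →
      Filter.Tendsto
        (fun n : ℕ => (1 / (n : ℝ)) *
          ((Finset.range n).filter
            (fun i => ∀ m, a m < x i m ∧ x i m ≤ b m)).card)
        Filter.atTop (nhds (∏ m, (b m - a m))) :=
  liminf_rect_freq_to_limit_general D x hliminf
end

section
/- Every sequence of IID uniform random numbers is almost surely completely uniformly distributed: let (Ω, ℱ, P) be a probability space and let (U_n)_{n≥0} be a sequence of independent random variables each distributed uniformly on [0,1] (i.e. the law of each U_n is Lebesgue measure restricted to [0,1]). Then for P-almost every ω ∈ Ω, the sequence (U_n(ω))_{n≥0} is CUD. -/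
open MeasureTheory

open scoped Classical

/-!
The indicators of the overlapping `d`-blocks `(U_i, …, U_{i+d-1})` lying in a box are not
independent, but those of the blocks starting at `i ≡ r (mod d)` are disjoint blocks, hence
pairwise independent and identically distributed, and Etemadi's strong law applies to each
residue class; averaging over the `d` classes gives the box frequency almost surely. This holds
simultaneously for the countably many rational boxes, and a general box is squeezed between
rational ones, as the frequency is monotone in the box and the volume is continuous.
-/

open ProbabilityTheory Filter Topology Finset

theorem Nat.count_mul_eq_sum_count_residues (p : ℕ → Prop) [DecidablePred p] (d m : ℕ) :
    Nat.count p (m * d) = ∑ r ∈ range d, Nat.count (fun k => p (k * d + r)) m := by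
  induction m with
  | zero => simp
  | succ m ih =>
    rw [add_mul, one_mul, Nat.count_add, ih, Nat.count_eq_card_filter_range, card_filter,
      ← sum_add_distrib]
    simp only [Nat.count_succ]

theorem Nat.tendsto_count_div_of_tendsto_count_residues (p : ℕ → Prop) [DecidablePred p]
    {d : ℕ} (hd : 0 < d) {L : ℝ}
    (h : ∀ r < d, Tendsto (fun m => (Nat.count (fun k => p (k * d + r)) m : ℝ) / m) atTop (𝓝 L)) :
    Tendsto (fun n => (Nat.count p n : ℝ) / n) atTop (𝓝 L) := by
  have hd' : (0 : ℝ) < d := by exact_mod_cast hd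
  have hmul : Tendsto (fun m => (Nat.count p (m * d) : ℝ) / (m * d : ℕ)) atTop (𝓝 L) := by
    have hsum : Tendsto
        (fun m => (∑ r ∈ range d, (Nat.count (fun k => p (k * d + r)) m : ℝ) / m) / d) atTop
        (𝓝 ((∑ _r ∈ range d, L) / d)) :=
      (tendsto_finsetSum _ fun r hr => h r (mem_range.1 hr)).div_const _
    rw [sum_const, card_range, nsmul_eq_mul, mul_div_cancel_left₀ _ hd'.ne'] at hsum
    refine hsum.congr fun m => ?_
    rw [Nat.count_mul_eq_sum_count_residues, ← sum_div, div_div]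
    push_cast
    ring
  -- `count p` is monotone, so convergence along the multiples of `d` suffices
  refine tendsto_div_of_monotone_of_exists_subseq_tendsto_div _ L
    (fun _ _ hmn => by exact_mod_cast Nat.count_monotone p hmn) fun a ha => ⟨(· * d), ?_,
      tendsto_id.atTop_mul_const' hd, hmul⟩
  obtain ⟨N, hN⟩ := exists_nat_gt (a - 1)⁻¹
  filter_upwards [eventually_ge_atTop N] with m hm
  have hma : (1 : ℝ) ≤ (a - 1) * m := by
    rw [inv_lt_iff_one_lt_mul₀ (by linarith)] at hN
    nlinarith [(Nat.cast_le (α := ℝ)).2 hm]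
  push_cast
  nlinarith

section Blocks

variable {Ω β : Type*} [MeasurableSpace β] {U : ℕ → Ω → β}

def block (U : ℕ → Ω → β) (d b : ℕ) (ω : Ω) : Fin d → β := fun j => U (b + j) ω

theorem comap_block_le_iSup (d b : ℕ) :
    MeasurableSpace.comap (block U d b) inferInstance
      ≤ ⨆ i ∈ Set.Ico b (b + d), MeasurableSpace.comap (U i) inferInstance := by
  simp only [MeasurableSpace.pi, MeasurableSpace.comap_iSup, MeasurableSpace.comap_comp]
  exact iSup_le fun j =>
    le_iSup₂ (f := fun i (_ : i ∈ Set.Ico b (b + d)) => MeasurableSpace.comap (U i) _)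
      (b + j) ⟨by omega, by omega⟩

variable [MeasurableSpace Ω] {P : Measure Ω}

theorem measurable_block (hmeas : ∀ n, Measurable (U n)) (d b : ℕ) : Measurable (block U d b) :=
  measurable_pi_lambda _ fun _ => hmeas _

theorem indepFun_block (hmeas : ∀ n, Measurable (U n)) (hU : iIndepFun U P) {d e b c : ℕ}
    (h : b + d ≤ c) : IndepFun (block U d b) (block U e c) P := by
  have hdisj : Disjoint (Set.Ico b (b + d)) (Set.Ico c (c + e)) :=
    Set.disjoint_left.2 fun i hi hi' => by simp only [Set.mem_Ico] at hi hi'; omega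
  rw [IndepFun_iff_Indep]
  exact indep_of_indep_of_le_left (indep_of_indep_of_le_right
    (indep_iSup_of_disjoint (fun i => (hmeas i).comap_le) hU.iIndep hdisj)
    (comap_block_le_iSup e c)) (comap_block_le_iSup d b)

theorem map_block (hmeas : ∀ n, Measurable (U n)) (hU : iIndepFun U P) {μ : Measure β}
    (hlaw : ∀ n, P.map (U n) = μ) (d b : ℕ) :
    P.map (block U d b) = Measure.pi fun _ : Fin d => μ := by
  have hinj : Function.Injective fun j : Fin d => b + (j : ℕ) :=
    fun j j' h => Fin.ext (Nat.add_left_cancel h)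
  exact ((hU.precomp hinj).map_fun_eq_pi_map fun j : Fin d => (hmeas (b + j)).aemeasurable).trans
    (by simp only [hlaw])

theorem identDistrib_block (hmeas : ∀ n, Measurable (U n)) (hU : iIndepFun U P) {μ : Measure β}
    (hlaw : ∀ n, P.map (U n) = μ) (d b c : ℕ) :
    IdentDistrib (block U d b) (block U d c) P P :=
  ⟨(measurable_block hmeas d b).aemeasurable, (measurable_block hmeas d c).aemeasurable,
    by rw [map_block hmeas hU hlaw, map_block hmeas hU hlaw]⟩

theorem ae_tendsto_count_block_mem_residue [IsProbabilityMeasure P] (hmeas : ∀ n, Measurable (U n))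
    (hU : iIndepFun U P) {μ : Measure β} (hlaw : ∀ n, P.map (U n) = μ) {d : ℕ}
    {S : Set (Fin d → β)} (hS : MeasurableSet S) (r : ℕ) :
    ∀ᵐ ω ∂P, Tendsto (fun m => (Nat.count (fun k => block U d (k * d + r) ω ∈ S) m : ℝ) / m)
      atTop (𝓝 ((Measure.pi fun _ : Fin d => μ).real S)) := by
  have hSind : Measurable (S.indicator (1 : (Fin d → β) → ℝ)) := measurable_one.indicator hS
  set X : ℕ → Ω → ℝ := fun k => S.indicator 1 ∘ block U d (k * d + r)
  have hindep : Pairwise fun k l => IndepFun (X k) (X l) P := by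
    have hlt : ∀ k l, k < l → IndepFun (X k) (X l) P := fun k l hkl =>
      (indepFun_block hmeas hU (by nlinarith : k * d + r + d ≤ l * d + r)).comp hSind hSind
    intro k l hkl
    rcases lt_or_gt_of_ne hkl with h | h
    · exact hlt k l h
    · exact (hlt l k h).symm
  have hident : ∀ k, IdentDistrib (X k) (X 0) P P := fun k =>
    (identDistrib_block hmeas hU hlaw d _ _).comp hSind
  have hint : Integrable (X 0) P :=
    ((integrable_const 1).indicator hS).comp_measurable (measurable_block hmeas d _)
  have hmean : P[X 0] = (Measure.pi fun _ : Fin d => μ).real S := by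
    rw [← integral_indicator_one hS, ← map_block hmeas hU hlaw d (0 * d + r),
      integral_map (measurable_block hmeas d _).aemeasurable hSind.aestronglyMeasurable]
    rfl
  filter_upwards [strong_law_ae_real X hint hindep hident] with ω hω
  rw [hmean] at hω
  refine hω.congr fun m => ?_
  simp [X, Set.indicator_apply, Nat.count_eq_card_filter_range]

theorem ae_tendsto_count_block_mem [IsProbabilityMeasure P] (hmeas : ∀ n, Measurable (U n))
    (hU : iIndepFun U P) {μ : Measure β} (hlaw : ∀ n, P.map (U n) = μ) {d : ℕ} (hd : 0 < d)
    {S : Set (Fin d → β)} (hS : MeasurableSet S) :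
    ∀ᵐ ω ∂P, Tendsto (fun n => (Nat.count (fun i => block U d i ω ∈ S) n : ℝ) / n)
      atTop (𝓝 ((Measure.pi fun _ : Fin d => μ).real S)) := by
  filter_upwards [ae_all_iff.2 (ae_tendsto_count_block_mem_residue hmeas hU hlaw hS)] with ω hω
  exact Nat.tendsto_count_div_of_tendsto_count_residues _ hd fun r _ => hω r

end Blocks


noncomputable def boxFreq (v : ℕ → ℝ) {d : ℕ} (a : Fin d → ℝ) (n : ℕ) : ℝ :=
  (Nat.count (fun i => ∀ j : Fin d, v (i + j) ∈ Set.Ioc 0 (a j)) n : ℝ) / n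

theorem isCUD_iff_tendsto_boxFreq (v : ℕ → ℝ) :
    IsCUD v ↔ ∀ d, 0 < d → ∀ a : Fin d → ℝ, (∀ j, a j ∈ Set.Icc (0 : ℝ) 1) →
      Tendsto (boxFreq v a) atTop (𝓝 (∏ j, a j)) := by
  unfold IsCUD boxFreq
  simp only [Nat.count_eq_card_filter_range, one_div_mul_eq_div]
  rfl

theorem boxFreq_mono (v : ℕ → ℝ) {d : ℕ} {a b : Fin d → ℝ} (hab : ∀ j, a j ≤ b j) (n : ℕ) :
    boxFreq v a n ≤ boxFreq v b n := by
  have : Nat.count (fun i => ∀ j : Fin d, v (i + j) ∈ Set.Ioc 0 (a j)) n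
      ≤ Nat.count (fun i => ∀ j : Fin d, v (i + j) ∈ Set.Ioc 0 (b j)) n :=
    Nat.count_mono_left fun i _ hi j => ⟨(hi j).1, (hi j).2.trans (hab j)⟩
  exact div_le_div_of_nonneg_right (by exact_mod_cast this) n.cast_nonneg

theorem measureReal_pi_uniform_box {ι : Type*} [Fintype ι] {a : ι → ℝ}
    (ha : ∀ j, a j ∈ Set.Icc (0 : ℝ) 1) :
    (Measure.pi fun _ : ι => volume.restrict (Set.Icc (0 : ℝ) 1)).real
      (Set.univ.pi fun j => Set.Ioc 0 (a j)) = ∏ j, a j := by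
  have hsub : ∀ j, Set.Ioc 0 (a j) ⊆ Set.Icc 0 1 := fun j =>
    Set.Ioc_subset_Icc_self.trans (Set.Icc_subset_Icc le_rfl (ha j).2)
  simp only [measureReal_def, Measure.pi_pi, Measure.restrict_apply measurableSet_Ioc,
    Set.inter_eq_left.2 (hsub _), Real.volume_Ioc, sub_zero, ENNReal.toReal_prod]
  exact prod_congr rfl fun j _ => ENNReal.toReal_ofReal (ha j).1

theorem ae_tendsto_boxFreq {Ω : Type*} [MeasurableSpace Ω] {P : Measure Ω}
    [IsProbabilityMeasure P] {U : ℕ → Ω → ℝ} (hmeas : ∀ n, Measurable (U n))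
    (hU : iIndepFun U P) (hunif : ∀ n, P.map (U n) = volume.restrict (Set.Icc (0 : ℝ) 1))
    {d : ℕ} (hd : 0 < d) {a : Fin d → ℝ} (ha : ∀ j, a j ∈ Set.Icc (0 : ℝ) 1) :
    ∀ᵐ ω ∂P, Tendsto (boxFreq (fun n => U n ω) a) atTop (𝓝 (∏ j, a j)) := by
  have := ae_tendsto_count_block_mem hmeas hU hunif hd
    (MeasurableSet.univ_pi fun j => (measurableSet_Ioc : MeasurableSet (Set.Ioc 0 (a j))))
  rw [measureReal_pi_uniform_box ha] at this
  simp only [block, Set.mem_univ_pi] at this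
  exact this

theorem exists_rat_le_of_lt_prod {ι : Type*} [Fintype ι] {a : ι → ℝ} (ha : ∀ j, a j ∈ Set.Icc 0 1)
    {b : ℝ} (hb : b < ∏ j, a j) :
    ∃ q : ι → ℚ, (∀ j, (q j : ℝ) ∈ Set.Icc 0 1) ∧ (∀ j, (q j : ℝ) ≤ a j) ∧ b < ∏ j, (q j : ℝ) := by
  set q : ℕ → ι → ℚ := fun n j => ⌊a j * (n + 1)⌋₊ / (n + 1)
  have hq : ∀ n j, (q n j : ℝ) = ⌊a j * (n + 1)⌋₊ / (n + 1) := fun n j => by push_cast [q]; rfl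
  have hlim : Tendsto (fun n => ∏ j, (q n j : ℝ)) atTop (𝓝 (∏ j, a j)) :=
    tendsto_finsetProd _ fun j _ => by
      simp only [hq]
      exact (tendsto_nat_floor_mul_div_atTop (ha j).1).comp
        (tendsto_natCast_atTop_atTop.atTop_add tendsto_const_nhds)
  obtain ⟨n, hn⟩ := (hlim.eventually (lt_mem_nhds hb)).exists
  have hle : ∀ j, (q n j : ℝ) ≤ a j := fun j => by
    rw [hq, div_le_iff₀ (by positivity)]
    exact Nat.floor_le (mul_nonneg (ha j).1 (by positivity))
  exact ⟨q n, fun j => ⟨by rw [hq]; positivity, (hle j).trans (ha j).2⟩, hle, hn⟩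

theorem exists_rat_ge_of_prod_lt {ι : Type*} [Fintype ι] {a : ι → ℝ} (ha : ∀ j, a j ∈ Set.Icc 0 1)
    {b : ℝ} (hb : ∏ j, a j < b) :
    ∃ q : ι → ℚ, (∀ j, (q j : ℝ) ∈ Set.Icc 0 1) ∧ (∀ j, a j ≤ q j) ∧ ∏ j, (q j : ℝ) < b := by
  set q : ℕ → ι → ℚ := fun n j => ⌈a j * (n + 1)⌉₊ / (n + 1)
  have hq : ∀ n j, (q n j : ℝ) = ⌈a j * (n + 1)⌉₊ / (n + 1) := fun n j => by push_cast [q]; rfl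
  have hlim : Tendsto (fun n => ∏ j, (q n j : ℝ)) atTop (𝓝 (∏ j, a j)) :=
    tendsto_finsetProd _ fun j _ => by
      simp only [hq]
      exact (tendsto_nat_ceil_mul_div_atTop (ha j).1).comp
        (tendsto_natCast_atTop_atTop.atTop_add tendsto_const_nhds)
  obtain ⟨n, hn⟩ := (hlim.eventually (gt_mem_nhds hb)).exists
  have hge : ∀ j, a j ≤ q n j := fun j => by
    rw [hq, le_div_iff₀ (by positivity)]
    exact Nat.le_ceil _
  refine ⟨q n, fun j => ⟨(ha j).1.trans (hge j), ?_⟩, hge, hn⟩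
  rw [hq, div_le_one (by positivity)]
  exact_mod_cast Nat.ceil_le.2 (by push_cast; nlinarith [(ha j).2])

theorem isCUD_of_tendsto_rat_boxes {v : ℕ → ℝ}
    (h : ∀ d, 0 < d → ∀ q : Fin d → ℚ, (∀ j, (q j : ℝ) ∈ Set.Icc 0 1) →
      Tendsto (boxFreq v fun j => (q j : ℝ)) atTop (𝓝 (∏ j, (q j : ℝ)))) :
    IsCUD v := by
  refine (isCUD_iff_tendsto_boxFreq v).2 fun d hd a ha =>
    tendsto_order.2 ⟨fun b hb => ?_, fun b hb => ?_⟩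
  · obtain ⟨q, hq01, hqa, hbq⟩ := exists_rat_le_of_lt_prod ha hb
    exact ((tendsto_order.1 (h d hd q hq01)).1 b hbq).mono fun n hn =>
      hn.trans_le (boxFreq_mono v hqa n)
  · obtain ⟨q, hq01, haq, hqb⟩ := exists_rat_ge_of_prod_lt ha hb
    exact ((tendsto_order.1 (h d hd q hq01)).2 b hqb).mono fun n hn =>
      (boxFreq_mono v haq n).trans_lt hn

/-- Every sequence of IID uniform random numbers is almost surely completely uniformly
distributed: if `(U_n)` are independent random variables on a probability space
`(Ω, ℱ, P)`, each with law equal to Lebesgue measure restricted to `[0,1]`, then for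
`P`-almost every `ω` the sequence `(U_n(ω))` is CUD. -/
theorem iid_uniform_ae_isCUD
    {Ω : Type*} [MeasurableSpace Ω] (P : Measure Ω) [IsProbabilityMeasure P]
    (U : ℕ → Ω → ℝ) (hmeas : ∀ n, Measurable (U n))
    (hindep : ProbabilityTheory.iIndepFun U P)
    (hunif : ∀ n, Measure.map (U n) P = volume.restrict (Set.Icc (0 : ℝ) 1)) :
    ∀ᵐ ω ∂P, IsCUD (fun n => U n ω) := by
  have hbox : ∀ᵐ ω ∂P, ∀ d (q : Fin d → ℚ), 0 < d → (∀ j, (q j : ℝ) ∈ Set.Icc 0 1) →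
      Tendsto (boxFreq (fun n => U n ω) fun j => (q j : ℝ)) atTop (𝓝 (∏ j, (q j : ℝ))) := by
    simp only [ae_all_iff, eventually_imp_distrib_left]
    exact fun d q hd hq => ae_tendsto_boxFreq hmeas hindep hunif hd hq
  filter_upwards [hbox] with ω hω
  exact isCUD_of_tendsto_rat_boxes fun d hd q hq => hω d q hd hq
end
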